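/- Let Γ be a linear order and let drk(Γ) be the collection of subsets S ⊆ Γ that are nonempty proper end segments of Γ and are definable with parameters in the first-order language of order, ordered by inclusion. Then for all a, b ∈ drk(Γ) with a ⊊ b, there exist d, d' ∈ drk(Γ) with a ⊆ d ⊊ d' ⊆ b such that no end segment E of Γ satisfies d ⊊ E ⊊ d'; in particular, d' is the immediate successor of d in drk(Γ). (Consequently, drk(Γ) has no densely ordered interval.) -/
import Mathlib

open FirstOrder

attribute [local instance] FirstOrder.Language.orderStructure

/-- An end segment of a linear order `Γ`: an upward closed subset. -/
def IsEndSegment {Γ : Type*} [LinearOrder Γ] (S : Set Γ) : Prop :=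
  ∀ ⦃i j : Γ⦄, i ∈ S → i ≤ j → j ∈ S

/-- The definable rank of a linear order `Γ`: the collection of nonempty proper end segments of
`Γ` that are definable with parameters in the first-order language of order, ordered by
inclusion. -/
def drk (Γ : Type*) [LinearOrder Γ] : Set (Set Γ) :=
  {S | S.Nonempty ∧ S ≠ Set.univ ∧ IsEndSegment S ∧
    Set.Definable₁ (Set.univ : Set Γ) Language.order S}

instance aux_orderedStructure {Γ : Type*} [LinearOrder Γ] : Language.order.OrderedStructure Γ :=
  ⟨fun _ => Iff.rfl⟩

lemma aux_definable_Ici {Γ : Type*} [LinearOrder Γ] (γ : Γ) :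
    Set.Definable₁ (Set.univ : Set Γ) Language.order (Set.Ici γ) := by
  rw [Set.Definable₁, Set.definable_iff_exists_formula_sum]
  refine ⟨Language.Term.le (Language.Term.var (Sum.inl (Sum.inl ⟨γ, Set.mem_univ γ⟩)))
    (Language.Term.var (Sum.inl (Sum.inr 0))), ?_⟩
  ext x
  simp [Language.Formula.Realize, Set.Ici]

lemma aux_definable_Ioi {Γ : Type*} [LinearOrder Γ] (γ : Γ) :
    Set.Definable₁ (Set.univ : Set Γ) Language.order (Set.Ioi γ) := by
  rw [Set.Definable₁, Set.definable_iff_exists_formula_sum]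
  refine ⟨Language.Term.lt (Language.Term.var (Sum.inl (Sum.inl ⟨γ, Set.mem_univ γ⟩)))
    (Language.Term.var (Sum.inl (Sum.inr 0))), ?_⟩
  ext x
  simp [Language.Formula.Realize, Set.Ioi]

/-- For all `a, b ∈ drk Γ` with `a ⊊ b`, there exist `d, d' ∈ drk Γ` with
`a ⊆ d ⊊ d' ⊆ b` such that no end segment `E` of `Γ` satisfies `d ⊊ E ⊊ d'`; in particular
`d'` is the immediate successor of `d` in `drk Γ`, so `drk Γ` has no densely ordered
interval. -/
theorem stmt_10 {Γ : Type*} [LinearOrder Γ] :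
    ∀ a ∈ drk Γ, ∀ b ∈ drk Γ, a ⊂ b →
      ∃ d ∈ drk Γ, ∃ d' ∈ drk Γ, a ⊆ d ∧ d ⊂ d' ∧ d' ⊆ b ∧
        ¬ ∃ E : Set Γ, IsEndSegment E ∧ d ⊂ E ∧ E ⊂ d' := by
  rintro a ⟨⟨x, hx⟩, -, haEnd, -⟩ b ⟨-, hbU, hbEnd, -⟩ hab
  obtain ⟨γ, hγb, hγa⟩ := Set.exists_of_ssubset hab
  -- every element of `a` is `> γ`
  have haIoi : a ⊆ Set.Ioi γ := fun y hy =>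
    lt_of_not_ge fun h => hγa (haEnd hy h)
  have hIcib : Set.Ici γ ⊆ b := fun y hy => hbEnd hγb hy
  obtain ⟨z, hz⟩ : ∃ z, z ∉ b := by
    by_contra h
    push_neg at h
    exact hbU (Set.eq_univ_of_forall h)
  refine ⟨Set.Ioi γ, ⟨⟨x, haIoi hx⟩, ?_, fun i j hi hij => lt_of_lt_of_le hi hij,
      aux_definable_Ioi γ⟩,
    Set.Ici γ, ⟨⟨γ, le_refl γ⟩, ?_, fun i j hi hij => le_trans hi hij,
      aux_definable_Ici γ⟩,
    haIoi, ⟨Set.Ioi_subset_Ici_self, fun h => lt_irrefl γ (h (le_refl γ))⟩,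
    hIcib, ?_⟩
  · intro h
    exact hz (hIcib (Set.Ioi_subset_Ici_self (h ▸ Set.mem_univ z)))
  · intro h
    exact hz (hIcib (h ▸ Set.mem_univ z))
  · rintro ⟨E, hEend, ⟨hE1, hE2⟩, hE3, hE4⟩
    have hγE : γ ∈ E := by
      obtain ⟨y, hyE, hyI⟩ := Set.exists_of_ssubset ⟨hE1, hE2⟩
      have : y = γ := le_antisymm (le_of_not_gt hyI) (hE3 hyE)
      exact this ▸ hyE
    exact hE4 fun y hy => hEend hγE hy
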